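/- arXiv:2009.05173 — 6 statements merged into one kernel-verified Lean document; each statement's English description precedes it below -/
import Mathlib

section
/- Let A be a commutative Noetherian ring, I an ideal, and α, β ∈ ℚ_{>0}. Then the product of the rational powers satisfies I^α · I^β ⊆ I^{α+β}. -/
/-- `x` satisfies an equation of integral dependence over the ideal `I`. -/
def IsIntegralOverIdeal {A : Type*} [CommRing A] (I : Ideal A) (x : A) : Prop :=
  ∃ n : ℕ, 0 < n ∧ ∃ c : ℕ → A, (∀ i ∈ Finset.Icc 1 n, c i ∈ I ^ i) ∧
    x ^ n + ∑ i ∈ Finset.Icc 1 n, c i * x ^ (n - i) = 0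

/-- The integral closure of an ideal, as a set. -/
def intCl {A : Type*} [CommRing A] (I : Ideal A) : Set A :=
  {x | IsIntegralOverIdeal I x}

/-- The rational power `I^{a/b}` of an ideal, as a set. -/
def ratPow {A : Type*} [CommRing A] (I : Ideal A) (a b : ℕ) : Set A :=
  {x | x ^ b ∈ intCl (I ^ a)}

/-- The rational power `I^q` for a rational exponent `q` (in lowest terms). -/
def ratPowQ {A : Type*} [CommRing A] (I : Ideal A) (q : ℚ) : Set A :=
  ratPow I q.num.toNat q.den

open Polynomial

/-- The key characterization: `x ∈ \overline{I^a}` iff `x tᵃ` is integral over the Rees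
algebra `A[It]`. -/
lemma isIntegralOverIdeal_iff_isIntegral_reesAlgebra {A : Type*} [CommRing A]
    (I : Ideal A) (a : ℕ) (x : A) :
    IsIntegralOverIdeal (I ^ a) x ↔ IsIntegral (reesAlgebra I) ((monomial a x : A[X])) := by
  constructor
  · rintro ⟨n, hn, c, hc, heq⟩
    -- replace `c` by a version supported on `Icc 1 n`
    set c' : ℕ → A := fun i => if i ∈ Finset.Icc 1 n then c i else 0 with hc'def
    have hc' : ∀ i, c' i ∈ I ^ (a * i) := by
      intro i
      simp only [hc'def]
      split
      · rw [pow_mul]; exact hc i ‹_›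
      · exact Ideal.zero_mem _
    have heq' : x ^ n + ∑ i ∈ Finset.Icc 1 n, c' i * x ^ (n - i) = 0 := by
      have hs : ∑ i ∈ Finset.Icc 1 n, c' i * x ^ (n - i)
          = ∑ i ∈ Finset.Icc 1 n, c i * x ^ (n - i) :=
        Finset.sum_congr rfl (fun i hi => by simp only [hc'def, if_pos hi])
      rw [hs]; exact heq
    refine ⟨X ^ n + ∑ i ∈ Finset.Icc 1 n,
        C (⟨monomial (a * i) (c' i), reesAlgebra.monomial_mem.mpr (hc' i)⟩ :
          (reesAlgebra I)) * X ^ (n - i), ?_, ?_⟩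
    · apply monic_X_pow_add
      apply lt_of_le_of_lt (degree_sum_le _ _)
      rw [Finset.sup_lt_iff (by exact_mod_cast WithBot.bot_lt_coe n)]
      intro i hi
      refine lt_of_le_of_lt (degree_C_mul_X_pow_le _ _) ?_
      have hi' := Finset.mem_Icc.mp hi
      exact_mod_cast Nat.sub_lt_of_pos_le hi'.1 hi'.2
    · simp only [eval₂_add, eval₂_finset_sum, eval₂_mul, eval₂_C, eval₂_X_pow]
      have hcoe : ∀ i, (algebraMap (reesAlgebra I) A[X])
          (⟨monomial (a * i) (c' i), reesAlgebra.monomial_mem.mpr (hc' i)⟩ :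
            (reesAlgebra I)) = monomial (a * i) (c' i) := fun i => rfl
      simp only [hcoe, monomial_pow]
      have hterm : ∀ i ∈ Finset.Icc 1 n,
          monomial (a * i) (c' i) * monomial (a * (n - i)) (x ^ (n - i))
            = monomial (a * n) (c' i * x ^ (n - i)) := by
        intro i hi
        rw [monomial_mul_monomial]
        congr 1
        rw [← Nat.mul_add, Nat.add_sub_cancel' (Finset.mem_Icc.mp hi).2]
      rw [Finset.sum_congr rfl hterm, ← map_sum, ← map_add, heq', map_zero]
  · rintro ⟨p, hm, hp⟩
    rw [← Polynomial.aeval_def] at hp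
    by_cases hn0 : p.natDegree = 0
    · have hp1 : p = 1 := (hm.natDegree_eq_zero).mp hn0
      rw [hp1, map_one] at hp
      have h10 : (1 : A) = 0 := by
        have := Polynomial.ext_iff.mp hp 0
        simpa using this
      have : Subsingleton A := subsingleton_of_zero_eq_one h10.symm
      exact ⟨1, one_pos, 0, by simp, Subsingleton.elim _ _⟩
    · set n := p.natDegree with hndef
      have hn : 0 < n := Nat.pos_of_ne_zero hn0
      have heval := Polynomial.aeval_eq_sum_range (p := p) ((monomial a x : A[X]))
      rw [hp] at heval
      -- take the coefficient of `t^(a*n)` in this identity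
      have h0 : (0 : A) = ∑ i ∈ Finset.range (n + 1),
          ((p.coeff i : A[X]).coeff (a * (n - i))) * x ^ i := by
        have := congrArg (fun q : A[X] => q.coeff (a * n)) heval
        simp only [coeff_zero, finset_sum_coeff] at this
        rw [this]
        refine Finset.sum_congr rfl ?_
        intro i hi
        have hi' : i ≤ n := Nat.lt_succ_iff.mp (Finset.mem_range.mp hi)
        have hsmul : p.coeff i • (monomial a x : A[X]) ^ i
            = (p.coeff i : A[X]) * monomial (a * i) (x ^ i) := by
          rw [Algebra.smul_def, monomial_pow]; rfl
        rw [hsmul]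
        have hexp : a * n = a * (n - i) + a * i := by
          rw [← Nat.mul_add, Nat.sub_add_cancel hi']
        rw [hexp, coeff_mul_monomial]
      rw [Finset.sum_range_succ] at h0
      have hlast : ((p.coeff n : A[X]).coeff (a * (n - n))) * x ^ n = x ^ n := by
        have : p.coeff n = 1 := hm.coeff_natDegree
        rw [this, Nat.sub_self, Nat.mul_zero]
        simp only [OneMemClass.coe_one, coeff_one_zero, one_mul]
      rw [hlast] at h0
      refine ⟨n, hn, fun j => (p.coeff (n - j) : A[X]).coeff (a * j), ?_, ?_⟩
      · intro j hj
        show (p.coeff (n - j) : A[X]).coeff (a * j) ∈ (I ^ a) ^ j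
        rw [← pow_mul]
        exact (p.coeff (n - j)).2 (a * j)
      · have hsum : ∑ i ∈ Finset.Icc 1 n, (p.coeff (n - i) : A[X]).coeff (a * i) * x ^ (n - i)
            = ∑ i ∈ Finset.range n, (p.coeff i : A[X]).coeff (a * (n - i)) * x ^ i := by
          refine Finset.sum_nbij' (fun j => n - j) (fun i => n - i) ?_ ?_ ?_ ?_ ?_
          · intro j hj
            have hj' := Finset.mem_Icc.mp hj
            show n - j ∈ Finset.range n
            exact Finset.mem_range.mpr (by omega)
          · intro i hi
            have hi' := Finset.mem_range.mp hi
            show n - i ∈ Finset.Icc 1 n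
            exact Finset.mem_Icc.mpr (by omega)
          · intro j hj
            have hj' := Finset.mem_Icc.mp hj
            show n - (n - j) = j
            omega
          · intro i hi
            have hi' := Finset.mem_range.mp hi
            show n - (n - i) = i
            omega
          · intro j hj
            have hj' := Finset.mem_Icc.mp hj
            have h' : n - (n - j) = j := by omega
            simp only [h']
        show x ^ n + ∑ i ∈ Finset.Icc 1 n,
            (p.coeff (n - i) : A[X]).coeff (a * i) * x ^ (n - i) = 0
        rw [hsum, add_comm]
        exact h0.symm

/-- `I^α · I^β ⊆ I^{α+β}` for positive rational exponents. -/
theorem ratPow_mul_subset {A : Type*} [CommRing A] [IsNoetherianRing A]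
    (I : Ideal A) (α β : ℚ) (hα : 0 < α) (hβ : 0 < β) :
    ∀ x ∈ ratPowQ I α, ∀ y ∈ ratPowQ I β, x * y ∈ ratPowQ I (α + β) := by
  intro x hx y hy
  set a1 := α.num.toNat with ha1
  set b1 := α.den with hb1
  set a2 := β.num.toNat with ha2
  set b2 := β.den with hb2
  set a3 := (α + β).num.toNat with ha3
  set b3 := (α + β).den with hb3
  have hx' : IsIntegral (reesAlgebra I) ((monomial a1 (x ^ b1) : A[X])) :=
    (isIntegralOverIdeal_iff_isIntegral_reesAlgebra I a1 (x ^ b1)).mp hx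
  have hy' : IsIntegral (reesAlgebra I) ((monomial a2 (y ^ b2) : A[X])) :=
    (isIntegralOverIdeal_iff_isIntegral_reesAlgebra I a2 (y ^ b2)).mp hy
  show IsIntegralOverIdeal (I ^ a3) ((x * y) ^ b3)
  rw [isIntegralOverIdeal_iff_isIntegral_reesAlgebra]
  -- the key numerical identity
  have hd1 : ((b1 : ℚ)) ≠ 0 := Nat.cast_ne_zero.mpr (Rat.den_ne_zero α)
  have hd2 : ((b2 : ℚ)) ≠ 0 := Nat.cast_ne_zero.mpr (Rat.den_ne_zero β)
  have hd3 : ((b3 : ℚ)) ≠ 0 := Nat.cast_ne_zero.mpr (Rat.den_ne_zero (α + β))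
  have e1 : ((a1 : ℚ)) = α * b1 := by
    have h := Rat.num_div_den α
    rw [div_eq_iff hd1] at h
    rw [← h]
    exact_mod_cast congrArg (Int.cast : ℤ → ℚ)
      (Int.toNat_of_nonneg (le_of_lt (Rat.num_pos.mpr hα)))
  have e2 : ((a2 : ℚ)) = β * b2 := by
    have h := Rat.num_div_den β
    rw [div_eq_iff hd2] at h
    rw [← h]
    exact_mod_cast congrArg (Int.cast : ℤ → ℚ)
      (Int.toNat_of_nonneg (le_of_lt (Rat.num_pos.mpr hβ)))
  have e3 : ((a3 : ℚ)) = (α + β) * b3 := by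
    have h := Rat.num_div_den (α + β)
    rw [div_eq_iff hd3] at h
    rw [← h]
    exact_mod_cast congrArg (Int.cast : ℤ → ℚ)
      (Int.toNat_of_nonneg (le_of_lt (Rat.num_pos.mpr (add_pos hα hβ))))
  have hkey : a1 * (b2 * b3) + a2 * (b1 * b3) = a3 * (b1 * b2) := by
    have hq : ((a1 * (b2 * b3) + a2 * (b1 * b3) : ℕ) : ℚ)
        = ((a3 * (b1 * b2) : ℕ) : ℚ) := by
      push_cast
      rw [e1, e2, e3]
      ring
    exact_mod_cast hq
  have hb1pos : 0 < b1 := α.pos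
  have hb2pos : 0 < b2 := β.pos
  apply IsIntegral.of_pow (n := b1 * b2) (Nat.mul_pos hb1pos hb2pos)
  have hmon : (monomial a3 ((x * y) ^ b3) : A[X]) ^ (b1 * b2)
      = (monomial a1 (x ^ b1) : A[X]) ^ (b2 * b3) * (monomial a2 (y ^ b2) : A[X]) ^ (b1 * b3) := by
    rw [monomial_pow, monomial_pow, monomial_pow, monomial_mul_monomial]
    rw [← pow_mul, ← pow_mul, ← pow_mul, mul_pow]
    rw [show b1 * (b2 * b3) = b3 * (b1 * b2) by ring,
        show b2 * (b1 * b3) = b3 * (b1 * b2) by ring, hkey]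
  rw [hmon]
  exact (hx'.pow _).mul (hy'.pow _)
end

section
/- Let A be a commutative ring, W ⊆ A a multiplicatively closed set, I an ideal of A, and α ∈ ℚ_{>0}. Then the localization of the rational power equals the rational power of the localization: W^{-1}(I^α) = (W^{-1}I)^α as ideals of W^{-1}A. -/
lemma intCl_map {A B : Type*} [CommRing A] [CommRing B] (φ : A →+* B) {I : Ideal A} {x : A}
    (hx : x ∈ intCl I) : φ x ∈ intCl (I.map φ) := by
  obtain ⟨n, hn, c, hc, heq⟩ := hx
  refine ⟨n, hn, fun i => φ (c i), fun i hi => ?_, ?_⟩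
  · rw [← Ideal.map_pow]; exact Ideal.mem_map_of_mem φ (hc i hi)
  · have := congrArg φ heq
    simpa [map_add, map_pow, map_sum, map_mul] using this

private lemma aux_ring {R : Type*} [CommRing R] (ci y P Q : R) (k m : ℕ)
    (hk : 1 ≤ k) (hkm : k ≤ m) :
    (ci * Q) * P ^ k * Q ^ (k - 1) * ((y * P) * Q) ^ (m - k)
      = ci * y ^ (m - k) * (P * Q) ^ m := by
  have h1 : Q ^ k = Q * Q ^ (k - 1) := by
    conv_lhs => rw [show k = 1 + (k - 1) by omega]
    rw [pow_add, pow_one]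
  have h2 : (P * Q) ^ m = (P * Q) ^ k * (P * Q) ^ (m - k) := by
    rw [← pow_add]; congr 1; omega
  rw [h2, mul_pow, mul_pow, mul_pow, h1]; ring

/-- Localization commutes with rational powers:
`W⁻¹(I^α) = (W⁻¹ I)^α` as ideals of `W⁻¹A`. -/
theorem ratPow_localization {A : Type*} [CommRing A] (W : Submonoid A)
    (I : Ideal A) (α : ℚ) (hα : 0 < α) :
    Ideal.map (algebraMap A (Localization W)) (Ideal.span (ratPowQ I α)) =
      Ideal.span (ratPowQ (Ideal.map (algebraMap A (Localization W)) I) α) := by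
  classical
  set L := Localization W with hL
  set φ := algebraMap A L with hφ
  set a := α.num.toNat with ha
  set b := α.den with hbdef
  have hb : 0 < b := α.den_pos
  apply le_antisymm
  · rw [Ideal.map_span, Ideal.span_le]
    rintro _ ⟨x, hx, rfl⟩
    apply Ideal.subset_span
    show (φ x) ^ b ∈ intCl ((I.map φ) ^ a)
    have h := intCl_map φ (hx : x ^ b ∈ intCl (I ^ a))
    rwa [map_pow, Ideal.map_pow] at h
  · rw [Ideal.span_le]
    intro y hy
    simp only [ratPowQ, ratPow, intCl, IsIntegralOverIdeal, Set.mem_setOf_eq, ← ha, ← hbdef] at hy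
    obtain ⟨n, hn, c, hc, heq⟩ := hy
    -- common denominator for the coefficients
    have key : ∀ i ∈ Finset.Icc 1 n, ∃ (dA : A) (uW : W), dA ∈ (I ^ a) ^ i ∧
        c i * φ uW = φ dA := by
      intro i hi
      have h1 : c i ∈ Ideal.map φ ((I ^ a) ^ i) := by
        have := hc i hi
        rwa [Ideal.map_pow, Ideal.map_pow]
      rw [IsLocalization.mem_map_algebraMap_iff W L] at h1
      obtain ⟨⟨dA, uW⟩, hd⟩ := h1
      exact ⟨dA, uW, dA.2, hd⟩
    choose! d u hd hcu using key
    set U : A := ∏ i ∈ Finset.Icc 1 n, (u i : A) with hUdef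
    have hUW : U ∈ W := Submonoid.prod_mem W (fun i _ => (u i).2)
    set D : ℕ → A := fun i => d i * ∏ j ∈ (Finset.Icc 1 n).erase i, (u j : A) with hDdef
    have hDmem : ∀ i ∈ Finset.Icc 1 n, D i ∈ (I ^ a) ^ i := fun i hi =>
      Ideal.mul_mem_right _ _ (hd i hi)
    have hDU : ∀ i ∈ Finset.Icc 1 n, c i * φ U = φ (D i) := by
      intro i hi
      have hsplit : U = (u i : A) * ∏ j ∈ (Finset.Icc 1 n).erase i, (u j : A) :=
        (Finset.mul_prod_erase _ _ hi).symm
      rw [hDdef, map_mul, hsplit, map_mul, ← mul_assoc, hcu i hi]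
    obtain ⟨⟨x, s⟩, hxs⟩ := IsLocalization.surj (M := W) y
    -- hxs : y * φ s = φ x
    have hx' : φ x = y * φ s := hxs.symm
    set E : A := (x * U) ^ (b * n) +
      ∑ i ∈ Finset.Icc 1 n, D i * (s : A) ^ (b * i) * U ^ (b * i - 1) * (x * U) ^ (b * (n - i))
      with hEdef
    have hmain : φ E = 0 := by
      rw [hEdef, map_add, map_sum]
      have hterm : ∀ i ∈ Finset.Icc 1 n,
          φ (D i * (s : A) ^ (b * i) * U ^ (b * i - 1) * (x * U) ^ (b * (n - i)))
            = c i * y ^ (b * n - b * i) * (φ s * φ U) ^ (b * n) := by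
        intro i hi
        obtain ⟨hi1, hin⟩ := Finset.mem_Icc.mp hi
        have hk : 1 ≤ b * i := Nat.one_le_iff_ne_zero.mpr (by positivity)
        have hkm : b * i ≤ b * n := Nat.mul_le_mul_left b hin
        have hsub : b * (n - i) = b * n - b * i := Nat.mul_sub b n i
        calc φ (D i * (s : A) ^ (b * i) * U ^ (b * i - 1) * (x * U) ^ (b * (n - i)))
            = φ (D i) * φ s ^ (b * i) * φ U ^ (b * i - 1) * (φ x * φ U) ^ (b * (n - i)) := by
              simp only [map_mul, map_pow]
          _ = (c i * φ U) * φ s ^ (b * i) * φ U ^ (b * i - 1)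
                * ((y * φ s) * φ U) ^ (b * n - b * i) := by rw [← hDU i hi, hx', hsub]
          _ = c i * y ^ (b * n - b * i) * (φ s * φ U) ^ (b * n) :=
              aux_ring (c i) y (φ s) (φ U) (b * i) (b * n) hk hkm
      rw [Finset.sum_congr rfl hterm, map_pow, map_mul, hx']
      have hfirst : (y * φ s * φ U) ^ (b * n) = y ^ (b * n) * (φ s * φ U) ^ (b * n) := by
        rw [mul_assoc, mul_pow]
      rw [hfirst, ← Finset.sum_mul, ← add_mul]
      have hzero : y ^ (b * n) + ∑ i ∈ Finset.Icc 1 n, c i * y ^ (b * n - b * i) = 0 := by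
        have : ∀ i ∈ Finset.Icc 1 n, c i * y ^ (b * n - b * i) = c i * (y ^ b) ^ (n - i) := by
          intro i hi
          rw [← pow_mul, Nat.mul_sub]
        rw [Finset.sum_congr rfl this, pow_mul]
        exact heq
      rw [hzero, zero_mul]
    obtain ⟨t, ht⟩ := (IsLocalization.map_eq_zero_iff W L E).mp hmain
    -- ht : ↑t * E = 0
    set z : A := (t : A) * x * U with hzdef
    have hbn : 1 ≤ b * n := Nat.one_le_iff_ne_zero.mpr (by positivity)
    have hzmem : z ∈ ratPow I a b := by
      refine ⟨n, hn, fun i => (t : A) ^ (b * i) * (D i * (s : A) ^ (b * i) * U ^ (b * i - 1)),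
        fun i hi => Ideal.mul_mem_left _ _ (Ideal.mul_mem_right _ _
          (Ideal.mul_mem_right _ _ (hDmem i hi))), ?_⟩
      have hLHS : (z ^ b) ^ n + ∑ i ∈ Finset.Icc 1 n,
          (t : A) ^ (b * i) * (D i * (s : A) ^ (b * i) * U ^ (b * i - 1)) * (z ^ b) ^ (n - i)
            = (t : A) ^ (b * n) * E := by
        rw [hEdef, mul_add, Finset.mul_sum]
        congr 1
        · rw [← pow_mul, hzdef, mul_assoc, mul_pow]
        · refine Finset.sum_congr rfl (fun i hi => ?_)
          obtain ⟨hi1, hin⟩ := Finset.mem_Icc.mp hi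
          have hexp : b * i + b * (n - i) = b * n := by
            rw [← Nat.mul_add, Nat.add_sub_cancel' hin]
          rw [← pow_mul, hzdef, mul_assoc, mul_pow, ← hexp, pow_add]
          ring
      rw [hLHS, show (t : A) ^ (b * n) = (t : A) ^ (b * n - 1) * (t : A) by
        rw [← pow_succ]; congr 1; omega, mul_assoc, ht, mul_zero]
    rw [SetLike.mem_coe, IsLocalization.mem_map_algebraMap_iff W L]
    refine ⟨⟨⟨z, Ideal.subset_span hzmem⟩,
      ⟨(t : A) * (s : A) * U, mul_mem (mul_mem t.2 s.2) hUW⟩⟩, ?_⟩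
    show y * φ ((t : A) * (s : A) * U) = φ z
    rw [hzdef, map_mul, map_mul, map_mul, map_mul, hx']
    ring
end

section
/- In R = K[x,y,z], let I = (xy, yz, zx) = (x,y) ∩ (x,z) ∩ (y,z). Then for all n ∈ ℕ, the symbolic power I^{(n)} equals the rational power (I^{(2)})^{n/2}, where I^{(2)} = (x^2y^2, xyz, x^2z^2, y^2z^2). -/
/-!
Membership of `f` in `(x_i, x_j)^n` says that every monomial of `f` has degree at least `n` in
`x_i, x_j`, i.e. that `v_{ij}(f) ≥ n` for the weighted-order valuation with weights `1` on
`x_i, x_j` and `0` on the third variable. So `I^{(n)}` is the monomial ideal of the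
`x^a y^b z^c` with `a + b, a + c, b + c ≥ n`.

If `a` is the smallest exponent and all pairwise sums are `≥ 2m`, then `x^a y^b z^c` is divisible
by `(xyz)^p (y²z²)^{m-p}` with `p = min a m`; hence `I^{(2m)} = J^m`, which gives `J = I^{(2)}`
and, for `f ∈ I^{(n)}`, `f² ∈ I^{(2n)} = J^n`. Conversely, a valuation with `v ≥ m` on an
ideal is `≥ m` on its integral closure, so `f² ∈ \overline{J^n}` forces `2 v_{ij}(f) ≥ 2n`.
-/

theorem mem_intCl_of_mem {A : Type*} [CommRing A] {I : Ideal A} {x : A} (hx : x ∈ I) :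
    x ∈ intCl I :=
  ⟨1, one_pos, fun _ => -x, by simpa using hx, by simp⟩

theorem pow_mul_pow_mul_pow_mem_pow {A : Type*} [CommRing A] {J : Ideal A} {x y z : A}
    (hxyz : x * y * z ∈ J) (hyz : y ^ 2 * z ^ 2 ∈ J) {m a b c : ℕ} (hab : a ≤ b) (hac : a ≤ c)
    (hb : 2 * m ≤ a + b) (hc : 2 * m ≤ a + c) : x ^ a * y ^ b * z ^ c ∈ J ^ m := by
  set p := min a m
  have hgen : (x * y * z) ^ p * (y ^ 2 * z ^ 2) ^ (m - p) ∈ J ^ m := by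
    have := Ideal.mul_mem_mul (Ideal.pow_mem_pow hxyz p) (Ideal.pow_mem_pow hyz (m - p))
    rwa [← pow_add, Nat.add_sub_cancel' (min_le_right a m)] at this
  refine Ideal.mem_of_dvd _ ?_ hgen
  have : (x * y * z) ^ p * (y ^ 2 * z ^ 2) ^ (m - p) =
      x ^ p * y ^ (p + 2 * (m - p)) * z ^ (p + 2 * (m - p)) := by
    rw [pow_add, pow_add, pow_mul, pow_mul]; ring
  rw [this]
  exact mul_dvd_mul (mul_dvd_mul (pow_dvd_pow _ (by omega)) (pow_dvd_pow _ (by omega)))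
    (pow_dvd_pow _ (by omega))

namespace AddValuation

variable {A : Type*} [CommRing A] (v : AddValuation A ℕ∞)

def geIdeal (n : ℕ) : Ideal A where
  carrier := {a | n ≤ v a}
  zero_mem' := by simp
  add_mem' ha hb := le_trans (le_min ha hb) (v.map_add _ _)
  smul_mem' r a ha := by
    simpa only [smul_eq_mul, Set.mem_ofPred_eq, v.map_mul] using le_add_left ha

variable {v}

@[simp]
theorem mem_geIdeal {n : ℕ} {a : A} : a ∈ v.geIdeal n ↔ n ≤ v a := Iff.rfl

theorem geIdeal_mul_le (m n : ℕ) : v.geIdeal m * v.geIdeal n ≤ v.geIdeal (m + n) :=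
  Ideal.mul_le.mpr fun a ha b hb => by
    simpa only [mem_geIdeal, v.map_mul, Nat.cast_add] using add_le_add ha hb

theorem pow_le_geIdeal {I : Ideal A} {m : ℕ} (h : I ≤ v.geIdeal m) (k : ℕ) :
    I ^ k ≤ v.geIdeal (k * m) := by
  induction k with
  | zero => intro a _; simp
  | succ k ih =>
    rw [pow_succ, add_one_mul]
    exact (Ideal.mul_mono ih h).trans (geIdeal_mul_le _ _)

theorem le_of_isIntegralOverIdeal {I : Ideal A} {m : ℕ} (hI : I ≤ v.geIdeal m) {x : A}
    (hx : IsIntegralOverIdeal I x) : (m : ℕ∞) ≤ v x := by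
  obtain ⟨N, hN, c, hc, heq⟩ := hx
  by_contra! hlt
  obtain ⟨s, hs⟩ : ∃ s : ℕ, v x = s := ENat.ne_top_iff_exists.mp (ne_top_of_lt hlt) |>.imp
    fun _ h => h.symm
  have hsm : s < m := by exact_mod_cast hs ▸ hlt
  -- every lower-order term of the equation has value above `N * s = v (x ^ N)`
  have hterm : ∀ i ∈ Finset.Icc 1 N, ((N * s + 1 : ℕ) : ℕ∞) ≤ v (c i * x ^ (N - i)) := by
    intro i hi
    obtain ⟨hi1, hiN⟩ := Finset.mem_Icc.mp hi
    have hci : ((i * m : ℕ) : ℕ∞) ≤ v (c i) := pow_le_geIdeal hI i (hc i hi)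
    rw [v.map_mul, v.map_pow, hs]
    calc ((N * s + 1 : ℕ) : ℕ∞) ≤ ((i * m + (N - i) * s : ℕ) : ℕ∞) := by
          obtain ⟨k, rfl⟩ := Nat.exists_eq_add_of_le hiN
          rw [Nat.add_sub_cancel_left]
          exact Nat.cast_le.mpr (by nlinarith [Nat.mul_le_mul_left i hsm])
      _ ≤ v (c i) + (N - i) • (s : ℕ∞) := by
          rw [Nat.cast_add, Nat.cast_mul (N - i), nsmul_eq_mul]
          exact add_le_add_left hci _
  have hxN : ((N * s + 1 : ℕ) : ℕ∞) ≤ v (x ^ N) := by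
    rw [eq_neg_of_add_eq_zero_left heq, v.map_neg]
    exact v.map_le_sum hterm
  rw [v.map_pow, hs, nsmul_eq_mul] at hxN
  exact absurd (by exact_mod_cast hxN) (by omega : ¬ N * s + 1 ≤ N * s)

theorem ratPow_subset_geIdeal {I : Ideal A} {m a b n : ℕ} (hI : I ≤ v.geIdeal m) (hb : 0 < b)
    (hn : b * n ≤ a * m) : ratPow I a b ⊆ v.geIdeal n := by
  intro x hx
  have hpow : ((b * n : ℕ) : ℕ∞) ≤ b * v x := by
    rw [← nsmul_eq_mul, ← v.map_pow]
    exact (Nat.cast_le.mpr hn).trans (le_of_isIntegralOverIdeal (pow_le_geIdeal hI a) hx)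
  rw [Nat.cast_mul] at hpow
  exact (ENat.mul_le_mul_left_iff (by exact_mod_cast hb.ne') (ENat.natCast_ne_top b)).mp hpow

end AddValuation

namespace MvPolynomial

variable {σ R : Type*} [CommRing R]

theorem mem_of_forall_monomial_mem {I : Ideal (MvPolynomial σ R)} {f : MvPolynomial σ R}
    (h : ∀ d ∈ f.support, monomial d (coeff d f) ∈ I) : f ∈ I :=
  f.as_sum ▸ Ideal.sum_mem I h

theorem X_pow_mul_X_pow_dvd_monomial {i j : σ} (hij : i ≠ j) (d : σ →₀ ℕ) (c : R) :
    X i ^ d i * X j ^ d j ∣ monomial d c := by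
  classical
  rw [X_pow_eq_monomial, X_pow_eq_monomial, monomial_mul, one_mul, monomial_dvd_monomial]
  refine ⟨Or.inr fun k => ?_, one_dvd c⟩
  by_cases hi : k = i <;> by_cases hj : k = j <;> simp_all [Finsupp.single_apply, eq_comm]

theorem weight_single_add_single [DecidableEq σ] (i j : σ) (d : σ →₀ ℕ) :
    Finsupp.weight (Pi.single i 1 + Pi.single j 1) d = d i + d j := by
  simp only [Finsupp.weight_apply, Pi.add_apply, smul_add, Finsupp.sum_add]
  rw [← Finsupp.weight_apply, ← Finsupp.weight_apply, Finsupp.weight_single_one_apply,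
    Finsupp.weight_single_one_apply]

theorem mem_of_forall_X_pow_mem {I : Ideal (MvPolynomial (Fin 3) R)} {f : MvPolynomial (Fin 3) R}
    (h : ∀ d ∈ f.support, X 0 ^ d 0 * X 1 ^ d 1 * X 2 ^ d 2 ∈ I) : f ∈ I := by
  refine mem_of_forall_monomial_mem fun d hd => ?_
  rw [monomial_eq, Finsupp.prod_fintype _ _ fun _ => pow_zero _, Fin.prod_univ_three]
  exact I.mul_mem_left _ (h d hd)

variable [IsDomain R]

noncomputable def weightedOrderValuation (w : σ → ℕ) : AddValuation (MvPolynomial σ R) ℕ∞ :=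
  AddValuation.of (fun f => (f : MvPowerSeries σ R).weightedOrder w)
    (by simp) (by simp [MvPowerSeries.weightedOrder_one])
    (fun f g => by simpa only [coe_add] using MvPowerSeries.min_weightedOrder_le_add w)
    (fun f g => by simp only [coe_mul, MvPowerSeries.weightedOrder_mul])

theorem le_weightedOrderValuation_iff {w : σ → ℕ} {n : ℕ} {f : MvPolynomial σ R} :
    (n : ℕ∞) ≤ weightedOrderValuation w f ↔ ∀ d ∈ f.support, n ≤ Finsupp.weight w d := by
  refine ⟨fun h d hd => ?_, fun h => MvPowerSeries.nat_le_weightedOrder w fun d hd => ?_⟩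
  · by_contra! hlt
    refine mem_support_iff.mp hd ?_
    rw [← coeff_coe]
    exact MvPowerSeries.coeff_eq_zero_of_lt_weightedOrder w ((Nat.cast_lt.mpr hlt).trans_le h)
  · rw [coeff_coe, ← notMem_support_iff]
    exact fun hmem => (h d hmem).not_gt hd

theorem span_X_pair_pow_eq_geIdeal [DecidableEq σ] {i j : σ} (hij : i ≠ j) (n : ℕ) :
    Ideal.span {X i, X j} ^ n =
      (weightedOrderValuation (R := R) (Pi.single i 1 + Pi.single j 1)).geIdeal n := by
  refine le_antisymm ?_ fun f hf => ?_
  · have hspan : Ideal.span {X i, X j} ≤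
        (weightedOrderValuation (R := R) (Pi.single i 1 + Pi.single j 1)).geIdeal 1 := by
      rw [Ideal.span_le]
      rintro _ (rfl | rfl) <;>
        exact le_weightedOrderValuation_iff.mpr (by simp [support_X, weight_single_add_single])
    simpa only [mul_one] using AddValuation.pow_le_geIdeal hspan n
  · rw [AddValuation.mem_geIdeal, le_weightedOrderValuation_iff] at hf
    refine mem_of_forall_monomial_mem fun d hd => ?_
    refine Ideal.mem_of_dvd _ (X_pow_mul_X_pow_dvd_monomial hij d _) ?_
    refine Ideal.pow_le_pow_right (weight_single_add_single i j d ▸ hf d hd) ?_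
    rw [pow_add]
    exact Ideal.mul_mem_mul (Ideal.pow_mem_pow (Ideal.subset_span (by simp)) _)
      (Ideal.pow_mem_pow (Ideal.subset_span (by simp)) _)

theorem mem_span_X_pair_pow_iff {i j : σ} (hij : i ≠ j) {n : ℕ} {f : MvPolynomial σ R} :
    f ∈ Ideal.span {X i, X j} ^ n ↔ ∀ d ∈ f.support, n ≤ d i + d j := by
  classical
  rw [span_X_pair_pow_eq_geIdeal hij, AddValuation.mem_geIdeal, le_weightedOrderValuation_iff]
  simp only [weight_single_add_single]

theorem ratPow_subset_span_X_pair_pow {i j : σ} (hij : i ≠ j) {I : Ideal (MvPolynomial σ R)}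
    {k a b n : ℕ} (hI : I ≤ Ideal.span {X i, X j} ^ k) (hb : 0 < b) (hn : b * n ≤ a * k) :
    ratPow I a b ⊆ (Ideal.span {X i, X j} ^ n : Ideal (MvPolynomial σ R)) := by
  classical
  rw [span_X_pair_pow_eq_geIdeal hij] at hI ⊢
  exact AddValuation.ratPow_subset_geIdeal hI hb hn

end MvPolynomial

namespace Triangle

open MvPolynomial

variable (R : Type*) [CommRing R]

noncomputable def edgeIdeal : Ideal (MvPolynomial (Fin 3) R) :=
  Ideal.span {X 0 * X 1, X 1 * X 2, X 2 * X 0}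

noncomputable def symbolicPower (n : ℕ) : Ideal (MvPolynomial (Fin 3) R) :=
  Ideal.span {X 0, X 1} ^ n ⊓ Ideal.span {X 0, X 2} ^ n ⊓ Ideal.span {X 1, X 2} ^ n

noncomputable def symbolicSquare : Ideal (MvPolynomial (Fin 3) R) :=
  Ideal.span {X 0 ^ 2 * X 1 ^ 2, X 0 * X 1 * X 2, X 0 ^ 2 * X 2 ^ 2, X 1 ^ 2 * X 2 ^ 2}

variable {R}

theorem symbolicPower_mul_le (a b : ℕ) :
    symbolicPower R a * symbolicPower R b ≤ symbolicPower R (a + b) := by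
  refine Ideal.mul_le.mpr fun f hf g hg => ?_
  simp only [symbolicPower, Submodule.mem_inf, pow_add] at hf hg ⊢
  exact ⟨⟨Ideal.mul_mem_mul hf.1.1 hg.1.1, Ideal.mul_mem_mul hf.1.2 hg.1.2⟩,
    Ideal.mul_mem_mul hf.2 hg.2⟩

theorem X_pow_mem_edgeIdeal {a b c : ℕ} (hab : 1 ≤ a + b) (hac : 1 ≤ a + c) (hbc : 1 ≤ b + c) :
    X 0 ^ a * X 1 ^ b * X 2 ^ c ∈ edgeIdeal R := by
  have mem : ∀ g ∈ ({X 0 * X 1, X 1 * X 2, X 2 * X 0} : Set (MvPolynomial (Fin 3) R)),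
      g ∣ X 0 ^ a * X 1 ^ b * X 2 ^ c → X 0 ^ a * X 1 ^ b * X 2 ^ c ∈ edgeIdeal R :=
    fun g hg hdvd => Ideal.mem_of_dvd _ hdvd (Ideal.subset_span hg)
  by_cases ha : a = 0
  · exact mem (X 1 * X 2) (by simp) <| (mul_dvd_mul (dvd_pow_self (X 1) (by omega : b ≠ 0))
      (dvd_pow_self (X 2) (by omega : c ≠ 0))).trans ⟨X 0 ^ a, by ring⟩
  by_cases hb : b = 0
  · exact mem (X 2 * X 0) (by simp) <| (mul_dvd_mul (dvd_pow_self (X 2) (by omega : c ≠ 0))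
      (dvd_pow_self (X 0) ha)).trans ⟨X 1 ^ b, by ring⟩
  · exact mem (X 0 * X 1) (by simp) <| (mul_dvd_mul (dvd_pow_self (X 0) ha)
      (dvd_pow_self (X 1) hb)).trans ⟨X 2 ^ c, by ring⟩

theorem X_pow_mem_symbolicSquare_pow {m a b c : ℕ} (hab : 2 * m ≤ a + b) (hac : 2 * m ≤ a + c)
    (hbc : 2 * m ≤ b + c) : X 0 ^ a * X 1 ^ b * X 2 ^ c ∈ symbolicSquare R ^ m := by
  have gen : ∀ g ∈ ({X 0 ^ 2 * X 1 ^ 2, X 0 * X 1 * X 2, X 0 ^ 2 * X 2 ^ 2, X 1 ^ 2 * X 2 ^ 2} :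
      Set (MvPolynomial (Fin 3) R)), g ∈ symbolicSquare R := fun g hg => Ideal.subset_span hg
  have hxyz : ∀ x y z : MvPolynomial (Fin 3) R, x * y * z = X 0 * X 1 * X 2 →
      x * y * z ∈ symbolicSquare R := fun x y z h => h ▸ gen _ (by simp)
  rcases (by omega : (a ≤ b ∧ a ≤ c) ∨ (b ≤ a ∧ b ≤ c) ∨ (c ≤ a ∧ c ≤ b)) with
    ⟨h1, h2⟩ | ⟨h1, h2⟩ | ⟨h1, h2⟩
  · exact pow_mul_pow_mul_pow_mem_pow (hxyz _ _ _ rfl) (gen _ (by simp)) h1 h2 hab hac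
  · convert pow_mul_pow_mul_pow_mem_pow (hxyz (X 1) (X 0) (X 2) (by ring)) (gen _ (by simp))
      h1 h2 (by omega) hbc using 1
    ring
  · convert pow_mul_pow_mul_pow_mem_pow (m := m) (hxyz (X 2) (X 0) (X 1) (by ring))
      (gen _ (by simp)) h1 h2 (by omega) (by omega) using 1
    ring

section Domain

variable [IsDomain R]

theorem mem_symbolicPower_iff {n : ℕ} {f : MvPolynomial (Fin 3) R} :
    f ∈ symbolicPower R n ↔
      ∀ d ∈ f.support, n ≤ d 0 + d 1 ∧ n ≤ d 0 + d 2 ∧ n ≤ d 1 + d 2 := by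
  simp only [symbolicPower, Submodule.mem_inf,
    mem_span_X_pair_pow_iff (by decide : (0 : Fin 3) ≠ 1),
    mem_span_X_pair_pow_iff (by decide : (0 : Fin 3) ≠ 2),
    mem_span_X_pair_pow_iff (by decide : (1 : Fin 3) ≠ 2), ← forall₂_and, and_assoc]

theorem X_pow_mem_symbolicPower {n a b c : ℕ} (hab : n ≤ a + b) (hac : n ≤ a + c)
    (hbc : n ≤ b + c) : X 0 ^ a * X 1 ^ b * X 2 ^ c ∈ symbolicPower R n := by
  have : (X 0 ^ a * X 1 ^ b * X 2 ^ c : MvPolynomial (Fin 3) R) =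
      monomial (Finsupp.single 0 a + Finsupp.single 1 b + Finsupp.single 2 c) 1 := by
    simp only [X_pow_eq_monomial, monomial_mul, mul_one]
  rw [this, mem_symbolicPower_iff]
  intro d hd
  rw [Finset.mem_singleton.mp (support_monomial_subset hd)]
  simp only [Finsupp.add_apply, Finsupp.single_apply, Fin.reduceEq, ↓reduceIte]
  omega

theorem symbolicPower_two_mul_le (m : ℕ) : symbolicPower R (2 * m) ≤ symbolicSquare R ^ m :=
  fun _ hf => mem_of_forall_X_pow_mem fun d hd =>
    have h := mem_symbolicPower_iff.mp hf d hd
    X_pow_mem_symbolicSquare_pow h.1 h.2.1 h.2.2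

theorem symbolicSquare_le : symbolicSquare R ≤ symbolicPower R 2 := by
  rw [symbolicSquare, Ideal.span_le]
  rintro _ (rfl | rfl | rfl | rfl)
  · simpa using X_pow_mem_symbolicPower (R := R) (n := 2) (a := 2) (b := 2) (c := 0)
      (by norm_num) (by norm_num) (by norm_num)
  · simpa using X_pow_mem_symbolicPower (R := R) (n := 2) (a := 1) (b := 1) (c := 1)
      (by norm_num) (by norm_num) (by norm_num)
  · simpa using X_pow_mem_symbolicPower (R := R) (n := 2) (a := 2) (b := 0) (c := 2)
      (by norm_num) (by norm_num) (by norm_num)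
  · simpa using X_pow_mem_symbolicPower (R := R) (n := 2) (a := 0) (b := 2) (c := 2)
      (by norm_num) (by norm_num) (by norm_num)

theorem symbolicSquare_eq : symbolicSquare R = symbolicPower R 2 :=
  le_antisymm symbolicSquare_le (by simpa using symbolicPower_two_mul_le (R := R) 1)

theorem edgeIdeal_eq_inf :
    edgeIdeal R = Ideal.span {X 0, X 1} ⊓ Ideal.span {X 0, X 2} ⊓ Ideal.span {X 1, X 2} := by
  rw [show _ ⊓ _ ⊓ _ = symbolicPower R 1 by simp only [symbolicPower, pow_one]]
  refine le_antisymm ?_ fun f hf => mem_of_forall_X_pow_mem fun d hd => ?_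
  · rw [edgeIdeal, Ideal.span_le]
    rintro _ (rfl | rfl | rfl)
    · simpa using X_pow_mem_symbolicPower (R := R) (n := 1) (a := 1) (b := 1) (c := 0)
        (by norm_num) (by norm_num) (by norm_num)
    · simpa using X_pow_mem_symbolicPower (R := R) (n := 1) (a := 0) (b := 1) (c := 1)
        (by norm_num) (by norm_num) (by norm_num)
    · rw [SetLike.mem_coe, mul_comm]
      simpa using X_pow_mem_symbolicPower (R := R) (n := 1) (a := 1) (b := 0) (c := 1)
        (by norm_num) (by norm_num) (by norm_num)
  · have h := mem_symbolicPower_iff.mp hf d hd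
    exact X_pow_mem_edgeIdeal h.1 h.2.1 h.2.2

theorem coe_symbolicPower_eq_ratPow (n : ℕ) :
    (symbolicPower R n : Set (MvPolynomial (Fin 3) R)) = ratPow (symbolicSquare R) n 2 := by
  ext f
  constructor
  · intro hf
    have hf2 : f ^ 2 ∈ symbolicPower R (2 * n) := by
      rw [pow_two, two_mul]
      exact symbolicPower_mul_le n n (Ideal.mul_mem_mul hf hf)
    exact mem_intCl_of_mem (symbolicPower_two_mul_le n hf2)
  · intro hf
    have pair : ∀ {i j : Fin 3}, i ≠ j → symbolicPower R 2 ≤ Ideal.span {X i, X j} ^ 2 →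
        f ∈ Ideal.span {X i, X j} ^ n := fun hij h =>
      ratPow_subset_span_X_pair_pow hij (symbolicSquare_le.trans h) two_pos
        (Nat.mul_comm 2 n).le hf
    exact ⟨⟨pair (by decide) (inf_le_left.trans inf_le_left),
      pair (by decide) (inf_le_left.trans inf_le_right)⟩, pair (by decide) inf_le_right⟩

end Domain

end Triangle

open MvPolynomial in
/-- In `K[x,y,z]`, for `I = (xy, yz, zx) = (x,y) ∩ (x,z) ∩ (y,z)`, the
ideal `J = (x²y², xyz, x²z², y²z²)` equals `I^{(2)}` and for every `n` the symbolic
power `I^{(n)} = (x,y)^n ∩ (x,z)^n ∩ (y,z)^n` is the rational power `(I^{(2)})^{n/2}`. -/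
theorem example_symbolic_ratPow {K : Type*} [Field K] :
    let R := MvPolynomial (Fin 3) K
    let x : R := X 0
    let y : R := X 1
    let z : R := X 2
    let symb : ℕ → Ideal R := fun n =>
      Ideal.span {x, y} ^ n ⊓ Ideal.span {x, z} ^ n ⊓ Ideal.span {y, z} ^ n
    let J : Ideal R := Ideal.span
      {x ^ 2 * y ^ 2, x * y * z, x ^ 2 * z ^ 2, y ^ 2 * z ^ 2}
    Ideal.span {x * y, y * z, z * x} =
        Ideal.span {x, y} ⊓ Ideal.span {x, z} ⊓ Ideal.span {y, z} ∧
      J = symb 2 ∧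
      ∀ n : ℕ, (symb n : Set R) = ratPow J n 2 := by
  intro R x y z symb J
  exact ⟨Triangle.edgeIdeal_eq_inf, Triangle.symbolicSquare_eq,
    Triangle.coe_symbolicPower_eq_ratPow⟩
end

section
/- Let I be a monomial ideal in R = K[x_1,...,x_d] with Rees valuations v_1,...,v_r, e = lcm{v_i(I)}, and w_i = (e/v_i(I)) v_i (integer-coefficient linear functionals on exponent vectors). Let m, k ∈ ℕ with k ≤ m, and let j satisfy m - k ≤ j ≤ m. Then for every monomial f ∈ R: f ∈ I^{m/e} if and only if f^{k+1} ∈ I^{(km+j)/e}. -/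
open MvPolynomial in
/-- For a monomial ideal `I` whose rational powers `I^{n/e}` are
characterized on monomials by the rescaled Rees valuations `w_i` (linear forms with
natural-number coefficients `c i`), if `k ≤ m` and `m - k ≤ j ≤ m` then a monomial `f`
lies in `I^{m/e}` iff `f^{k+1}` lies in `I^{(km+j)/e}`. -/
theorem ratPow_monomial_power_iff {K : Type*} [Field K] {d r : ℕ}
    (I : Ideal (MvPolynomial (Fin d) K))
    (hmono : ∃ S : Set (Fin d →₀ ℕ), I = Ideal.span ((fun α => monomial α (1 : K)) '' S))
    (c : Fin r → Fin d → ℕ) (e : ℕ) (he : 0 < e)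
    (hmem : ∀ (α : Fin d →₀ ℕ) (n : ℕ),
      monomial α (1 : K) ∈ ratPow I n e ↔ ∀ i, n ≤ ∑ j, c i j * α j)
    (m k j : ℕ) (hk : k ≤ m) (hj1 : m - k ≤ j) (hj2 : j ≤ m)
    (α : Fin d →₀ ℕ) :
    monomial α (1 : K) ∈ ratPow I m e ↔
      (monomial α (1 : K)) ^ (k + 1) ∈ ratPow I (k * m + j) e := by
  have hpow : (monomial α (1 : K)) ^ (k + 1) = monomial ((k+1) • α) (1 : K) := by
    rw [monomial_pow, one_pow]
  rw [hpow, hmem, hmem]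
  have hsum : ∀ i, ∑ j, c i j * ((k+1) • α) j = (k+1) * ∑ j, c i j * α j := by
    intro i
    rw [Finset.mul_sum]
    refine Finset.sum_congr rfl fun x _ => ?_
    simp [Finsupp.smul_apply]
    ring
  constructor
  · intro h i
    have := h i
    rw [hsum]
    calc k * m + j ≤ k * m + m := by omega
      _ = (k+1) * m := by ring
      _ ≤ (k+1) * ∑ j, c i j * α j := Nat.mul_le_mul_left _ this
  · intro h i
    by_contra hlt
    push_neg at hlt
    have h0 := h i
    rw [hsum i] at h0
    cases m with
    | zero => omega
    | succ m' =>
      have h1 : (k+1) * (∑ j, c i j * α j) ≤ (k+1) * m' :=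
        Nat.mul_le_mul_left _ (by omega)
      have e1 : (k+1) * m' = k * m' + m' := by ring
      have e2 : k * (m' + 1) = k * m' + k := by ring
      omega
end

section
/- Let I be a monomial ideal in R = K[x_1,...,x_d], e = lcm{v(I) : v ∈ RV(I)}, and w_1,...,w_r the rescaled Rees valuations with natural-number coefficients. Fix m, n ∈ ℕ and 1 ≤ j ≤ m. If x^α is a monomial in I^{(nm+j)/e} with α ≡ 0 (mod m) componentwise, then x^{α/m} ∈ I^{(n+1)/e}. That is, the splitting map φ_m sends I^{(nm+j)/e} into I^{(n+1)/e}. -/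
open MvPolynomial in
/-- The splitting map `φ_m` sends `I^{(nm+j)/e}` into `I^{(n+1)/e}`:
if `x^{m•β} ∈ I^{(nm+j)/e}` with `1 ≤ j ≤ m`, then `x^β ∈ I^{(n+1)/e}`. -/
theorem ratPow_splitting {K : Type*} [Field K] {d r : ℕ}
    (I : Ideal (MvPolynomial (Fin d) K))
    (hmono : ∃ S : Set (Fin d →₀ ℕ), I = Ideal.span ((fun α => monomial α (1 : K)) '' S))
    (c : Fin r → Fin d → ℕ) (e : ℕ) (he : 0 < e)
    (hmem : ∀ (α : Fin d →₀ ℕ) (n : ℕ),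
      monomial α (1 : K) ∈ ratPow I n e ↔ ∀ i, n ≤ ∑ j, c i j * α j)
    (m n j : ℕ) (hj1 : 1 ≤ j) (hj2 : j ≤ m) (β : Fin d →₀ ℕ)
    (h : monomial (m • β) (1 : K) ∈ ratPow I (n * m + j) e) :
    monomial β (1 : K) ∈ ratPow I (n + 1) e := by
  rw [hmem] at h ⊢
  intro i
  have hi := h i
  simp only [Finsupp.smul_apply, smul_eq_mul, mul_left_comm, ← Finset.mul_sum] at hi
  by_contra hlt
  push_neg at hlt
  have h2 : m * ∑ k, c i k * β k ≤ n * m :=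
    Nat.mul_comm n m ▸ Nat.mul_le_mul_left m (Nat.lt_succ_iff.mp hlt)
  omega
end

section
/- Let A be a Noetherian domain, I a nonzero ideal, and a/b ∈ ℚ_{>0}. Then the rational power I^{a/b} = {x ∈ A | x^b ∈ \overline{I^a}} is an ideal of A (closed under addition and under multiplication by elements of A). -/
/-! Integral dependence of `y` on `J` is integral dependence of `y t^b` on the Rees algebra
`A[J t^b] ⊆ A[t]`: an equation for `y` of degree `n` gives one for `y t^b` with coefficients
`c_i t^{bi}`, and conversely the coefficient of `t^{bn}` in a monic equation for `y t^b` is an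
equation for `y`. Since `(x t)^b = x^b t^b`, the rational power `I^{a/b}` is the set of `x` with
`x t` integral over `A[I^a t^b]`, and integral elements form a subring. -/

open Polynomial

lemma Finset.sum_Icc_one_sub_eq_sum_range {M : Type*} [AddCommMonoid M] (f : ℕ → M) (n : ℕ) :
    ∑ i ∈ Finset.Icc 1 n, f (n - i) = ∑ k ∈ Finset.range n, f k := by
  rw [← Finset.Ico_add_one_right_eq_Icc, Finset.sum_Ico_reflect _ _ le_rfl]
  simp

section ReesAlgebra

variable {A : Type*} [CommRing A] (J : Ideal A) (b : ℕ)

/-- The Rees algebra `A[J t^b] ⊆ A[t]`. -/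
noncomputable def expandReesAlgebra : Subalgebra A A[X] :=
  (reesAlgebra J).map (expand A b)

variable {J b}

lemma monomial_mem_expandReesAlgebra {i : ℕ} {c : A} (hc : c ∈ J ^ i) :
    monomial (i * b) c ∈ expandReesAlgebra J b :=
  ⟨monomial i c, reesAlgebra.monomial_mem.mpr hc, expand_monomial _ _ c⟩

lemma coeff_mem_of_mem_expandReesAlgebra (hb : 0 < b) {f : A[X]}
    (hf : f ∈ expandReesAlgebra J b) (i : ℕ) : f.coeff (i * b) ∈ J ^ i := by
  obtain ⟨g, hg, rfl⟩ := hf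
  exact (coeff_expand_mul hb g i).symm ▸ hg i

lemma IsIntegralOverIdeal.exists_forall_mem_pow {y : A} (hy : IsIntegralOverIdeal J y) :
    ∃ n, 0 < n ∧ ∃ c : ℕ → A, (∀ i, c i ∈ J ^ i) ∧
      y ^ n + ∑ i ∈ Finset.Icc 1 n, c i * y ^ (n - i) = 0 := by
  classical
  obtain ⟨n, hn, c, hc, hy⟩ := hy
  refine ⟨n, hn, fun i => if i ∈ Finset.Icc 1 n then c i else 0, fun i => ?_, ?_⟩
  · dsimp only
    split_ifs with hi
    exacts [hc i hi, zero_mem _]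
  · refine (congrArg (y ^ n + ·) (Finset.sum_congr rfl fun i hi => ?_)).trans hy
    simp only [if_pos hi]

lemma IsIntegralOverIdeal.isIntegral_monomial {y : A} (hy : IsIntegralOverIdeal J y) :
    IsIntegral (expandReesAlgebra J b) (monomial b y) := by
  obtain ⟨n, hn, c, hc, hy⟩ := hy.exists_forall_mem_pow
  let q : (expandReesAlgebra J b)[X] := ∑ i ∈ Finset.Icc 1 n,
    C ⟨monomial (i * b) (c i), monomial_mem_expandReesAlgebra (hc i)⟩ * X ^ (n - i)
  have hq : q.degree < n := by
    refine (degree_sum_le _ _).trans_lt <| (Finset.sup_lt_iff (WithBot.bot_lt_coe n)).mpr ?_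
    intro i hi
    have : n - i < n := by grind
    exact (degree_C_mul_X_pow_le _ _).trans_lt (WithBot.coe_lt_coe.mpr this)
  refine ⟨X ^ n + q, monic_X_pow_add hq, ?_⟩
  have hterm : ∀ i ∈ Finset.Icc 1 n,
      monomial (i * b) (c i) * monomial b y ^ (n - i) = monomial (b * n) (c i * y ^ (n - i)) := by
    intro i hi
    rw [monomial_pow, monomial_mul_monomial, mul_comm i, ← mul_add, Nat.add_sub_cancel' (Finset.mem_Icc.mp hi).2]
  simp only [q, eval₂_add, eval₂_X_pow, eval₂_finsetSum, eval₂_mul, eval₂_C,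
    Subalgebra.algebraMap_apply]
  rw [Finset.sum_congr rfl hterm, monomial_pow, ← map_sum, ← map_add, hy, map_zero]

lemma isIntegralOverIdeal_of_isIntegral_monomial (hb : 0 < b) {y : A}
    (hy : IsIntegral (expandReesAlgebra J b) (monomial b y)) : IsIntegralOverIdeal J y := by
  rcases subsingleton_or_nontrivial A with hA | hA
  · exact ⟨1, one_pos, 0, fun _ _ => zero_mem _, Subsingleton.elim _ _⟩
  obtain ⟨p, hp, hpy⟩ := hy
  set n := p.natDegree
  have hn : 0 < n := by
    refine Nat.pos_of_ne_zero fun h => ?_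
    rw [hp.natDegree_eq_zero.mp h, eval₂_one] at hpy
    exact one_ne_zero hpy
  set c : ℕ → A := fun i => (p.coeff (n - i) : A[X]).coeff (i * b)
  refine ⟨n, hn, c, fun i _ => coeff_mem_of_mem_expandReesAlgebra hb (p.coeff _).2 i, ?_⟩
  have hterm : ∀ k ∈ Finset.range (n + 1),
      (algebraMap _ A[X] (p.coeff k) * monomial b y ^ k).coeff (n * b) = c (n - k) * y ^ k := by
    intro k hk
    have hk : k ≤ n := Finset.mem_range_succ_iff.mp hk
    rw [monomial_pow, show n * b = (n - k) * b + b * k by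
      rw [mul_comm b, ← add_mul, Nat.sub_add_cancel hk], coeff_mul_monomial]
    simp only [c, Nat.sub_sub_self hk]
    rfl
  have hcoeff := congrArg (coeff · (n * b)) hpy
  simp only [eval₂_eq_sum_range, finsetSum_coeff, coeff_zero] at hcoeff
  rw [Finset.sum_congr rfl hterm, Finset.sum_range_succ, Nat.sub_self] at hcoeff
  have hc0 : c 0 = 1 := by simp [c, n, hp.coeff_natDegree]
  have hsum : ∑ i ∈ Finset.Icc 1 n, c i * y ^ (n - i) = ∑ k ∈ Finset.range n, c (n - k) * y ^ k := by
    rw [← Finset.sum_Icc_one_sub_eq_sum_range]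
    exact Finset.sum_congr rfl fun i hi => by rw [Nat.sub_sub_self (Finset.mem_Icc.mp hi).2]
  rwa [hsum, add_comm, ← one_mul (y ^ n), ← hc0]

theorem isIntegralOverIdeal_iff_isIntegral_monomial (hb : 0 < b) {y : A} :
    IsIntegralOverIdeal J y ↔ IsIntegral (expandReesAlgebra J b) (monomial b y) :=
  ⟨IsIntegralOverIdeal.isIntegral_monomial, isIntegralOverIdeal_of_isIntegral_monomial hb⟩

end ReesAlgebra

theorem mem_ratPow_iff_isIntegral {A : Type*} [CommRing A] {I : Ideal A} {a b : ℕ} (hb : 0 < b)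
    {x : A} : x ∈ ratPow I a b ↔ IsIntegral (expandReesAlgebra (I ^ a) b) (monomial 1 x) := by
  rw [← IsIntegral.pow_iff hb, monomial_pow, one_mul]
  exact isIntegralOverIdeal_iff_isIntegral_monomial hb

theorem ratPow_isIdeal_general {A : Type*} [CommRing A]
    (I : Ideal A) (a b : ℕ) (hb : 0 < b) :
    (0 : A) ∈ ratPow I a b ∧
      (∀ x ∈ ratPow I a b, ∀ y ∈ ratPow I a b, x + y ∈ ratPow I a b) ∧
      (∀ r : A, ∀ x ∈ ratPow I a b, r * x ∈ ratPow I a b) := by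
  simp only [mem_ratPow_iff_isIntegral hb]
  refine ⟨?_, fun x hx y hy => ?_, fun r x hx => ?_⟩
  · rw [map_zero]
    exact isIntegral_zero
  · rw [map_add]
    exact hx.add hy
  · rw [← smul_eq_mul, map_smul]
    exact hx.smul r

/-- In a Noetherian domain, the rational power
`I^{a/b} = {x | x^b ∈ \overline{I^a}}` of a nonzero ideal is an ideal: it contains `0`
and is closed under addition and under multiplication by ring elements. -/
theorem ratPow_isIdeal {A : Type*} [CommRing A] [IsDomain A] [IsNoetherianRing A]
    (I : Ideal A) (hI : I ≠ ⊥) (a b : ℕ) (ha : 0 < a) (hb : 0 < b) :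
    (0 : A) ∈ ratPow I a b ∧
      (∀ x ∈ ratPow I a b, ∀ y ∈ ratPow I a b, x + y ∈ ratPow I a b) ∧
      (∀ r : A, ∀ x ∈ ratPow I a b, r * x ∈ ratPow I a b) :=
  ratPow_isIdeal_general I a b hb
end
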